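/- arXiv:2605.23244 — 2 statements merged into one kernel-verified Lean document; each statement's English description precedes it below -/
import Mathlib

section
/- Let f : ℝ^d → ℝ be convex and differentiable with gradient ∇f Lipschitz continuous with constant L > 0, and suppose f attains a global minimum at x* ∈ ℝ^d. Define the accelerated gradient descent iterates by x_0 = y_0 ∈ ℝ^d, t_0 = 1, and for k ≥ 0: y_{k+1} = x_k − (1/L) ∇f(x_k), t_{k+1} = (1 + √(1 + 4 t_k²))/2, and x_{k+1} = y_{k+1} + ((t_k − 1)/t_{k+1})·(y_{k+1} − y_k). Then for every k ≥ 1, f(y_k) − f(x*) ≤ 2 L ‖x_0 − x*‖² / (k + 1)². -/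
/-!
Nesterov's method does not increase the energy
`(2 / L) t_k² (f(y_{k+1}) - f(x*)) + ‖t_k y_{k+1} - (t_k - 1) y_k - x*‖²`.
By convexity and the descent lemma, the gradient step `x⁺ = x - ∇f(x) / L` satisfies
`f(x⁺) ≤ f(z) + ⟪∇f(x), x - z⟫ - ‖∇f(x)‖² / (2L)` for every `z`. Adding these at `x = x_{k+1}`
for `z = y_{k+1}` and `z = x*` with weights `t_{k+1} - 1` and `1`, the momentum rule turns the
inner product terms into a difference of squared norms, and `t_{k+1}² - t_{k+1} = t_k²` matches
the function-value terms. The energy starts below `‖x_0 - x*‖²` and `t_k ≥ (k + 2) / 2`, which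
gives the rate.
-/

open Set
open scoped InnerProductSpace

/-- The positive root `s` of `s² - s = a²`. -/
noncomputable def nesterovNext (a : ℝ) : ℝ := (1 + √(1 + 4 * a ^ 2)) / 2

theorem nesterovNext_sq_sub_self (a : ℝ) : nesterovNext a ^ 2 - nesterovNext a = a ^ 2 := by
  have := Real.sq_sqrt (by positivity : (0 : ℝ) ≤ 1 + 4 * a ^ 2)
  unfold nesterovNext
  linear_combination this / 4

theorem add_half_le_nesterovNext (a : ℝ) : a + 1 / 2 ≤ nesterovNext a := by
  have : 2 * a ≤ √(1 + 4 * a ^ 2) := Real.le_sqrt_of_sq_le (by nlinarith)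
  unfold nesterovNext
  linarith

theorem add_two_div_two_le_of_nesterovNext {t : ℕ → ℝ} (ht0 : t 0 = 1)
    (ht : ∀ k, t (k + 1) = nesterovNext (t k)) (k : ℕ) : ((k : ℝ) + 2) / 2 ≤ t k := by
  induction k with
  | zero => simp [ht0]
  | succ k ih =>
    rw [ht k]
    have := add_half_le_nesterovNext (t k)
    push_cast
    linarith

section ConvexSmooth

variable {E : Type*} [NormedAddCommGroup E] [InnerProductSpace ℝ E] [CompleteSpace E]
  {f : E → ℝ} {f' : E → E}

theorem HasGradientAt.hasDerivAt_comp_add_smul {g a v : E} {s : ℝ}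
    (h : HasGradientAt f g (a + s • v)) :
    HasDerivAt (fun s : ℝ ↦ f (a + s • v)) ⟪g, v⟫_ℝ s := by
  have hline : HasDerivAt (fun s : ℝ ↦ a + s • v) v s := by
    simpa using ((hasDerivAt_id s).smul_const v).const_add a
  exact (hasGradientAt_iff_hasFDerivAt.1 h).comp_hasDerivAt s hline

theorem ConvexOn.add_inner_gradient_le (hconv : ConvexOn ℝ univ f) {g a : E}
    (hgrad : HasGradientAt f g a) (z : E) :
    f a + ⟪g, z - a⟫_ℝ ≤ f z := by
  have hline : ConvexOn ℝ univ (fun s : ℝ ↦ f (a + s • (z - a))) := by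
    have := hconv.comp_affineMap (AffineMap.lineMap a z : ℝ →ᵃ[ℝ] E)
    simpa [Function.comp_def, AffineMap.lineMap_apply, add_comm] using this
  have hderiv := (show HasGradientAt f g (a + (0 : ℝ) • (z - a)) by
    rwa [zero_smul, add_zero]).hasDerivAt_comp_add_smul
  have := hline.le_slope_of_hasDerivAt (mem_univ 0) (mem_univ 1) one_pos hderiv
  simp only [slope_def_field, one_smul, zero_smul, add_zero, add_sub_cancel, sub_zero,
    div_one] at this
  linarith

theorem le_add_inner_add_sq_of_lipschitz_gradient {L : ℝ}
    (hgrad : ∀ θ, HasGradientAt f (f' θ) θ) (hlip : ∀ a b, ‖f' a - f' b‖ ≤ L * ‖a - b‖)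
    (a b : E) :
    f b ≤ f a + ⟪f' a, b - a⟫_ℝ + L / 2 * ‖b - a‖ ^ 2 := by
  set v := b - a
  let φ : ℝ → ℝ := fun s ↦ f (a + s • v) - s * ⟪f' a, v⟫_ℝ - L / 2 * s ^ 2 * ‖v‖ ^ 2
  let φ' : ℝ → ℝ := fun s ↦ ⟪f' (a + s • v) - f' a, v⟫_ℝ - L * s * ‖v‖ ^ 2
  have hφ : ∀ s, HasDerivAt φ (φ' s) s := by
    intro s
    have h : HasDerivAt φ _ s := ((hgrad (a + s • v)).hasDerivAt_comp_add_smul.sub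
      ((hasDerivAt_id s).mul_const ⟪f' a, v⟫_ℝ)).sub
      (((hasDerivAt_pow 2 s).const_mul (L / 2)).mul_const (‖v‖ ^ 2))
    refine h.congr_deriv ?_
    simp only [φ', inner_sub_left, Nat.cast_ofNat]
    ring
  have hφ'_nonpos : ∀ s ∈ interior (Ici (0 : ℝ)), φ' s ≤ 0 := by
    intro s hs
    rw [interior_Ici] at hs
    have hstep : ‖f' (a + s • v) - f' a‖ ≤ L * (s * ‖v‖) := by
      simpa [norm_smul, abs_of_pos (mem_Ioi.1 hs)] using hlip (a + s • v) a
    have := (real_inner_le_norm _ _).trans (mul_le_mul_of_nonneg_right hstep (norm_nonneg v))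
    simp only [φ']
    nlinarith
  have hanti : AntitoneOn φ (Ici 0) :=
    antitoneOn_of_hasDerivWithinAt_nonpos (convex_Ici 0)
      (fun s _ ↦ (hφ s).continuousAt.continuousWithinAt)
      (fun s _ ↦ (hφ s).hasDerivWithinAt) hφ'_nonpos
  have := hanti self_mem_Ici (show (0 : ℝ) ≤ 1 from zero_le_one) zero_le_one
  simp only [φ, v, one_smul, zero_smul, add_zero, add_sub_cancel] at this
  linarith

theorem gradient_step_le {L : ℝ} (hL : 0 < L) (hconv : ConvexOn ℝ univ f)
    (hgrad : ∀ θ, HasGradientAt f (f' θ) θ) (hlip : ∀ a b, ‖f' a - f' b‖ ≤ L * ‖a - b‖)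
    (a z : E) :
    f (a - (1 / L) • f' a) ≤ f z + ⟪f' a, a - z⟫_ℝ - 1 / (2 * L) * ‖f' a‖ ^ 2 := by
  have hdescent := le_add_inner_add_sq_of_lipschitz_gradient hgrad hlip a (a - (1 / L) • f' a)
  have hconvex := hconv.add_inner_gradient_le (hgrad a) z
  rw [sub_sub_cancel_left, inner_neg_right, norm_neg, inner_smul_right, real_inner_self_eq_norm_sq,
    norm_smul, mul_pow, Real.norm_of_nonneg (by positivity)] at hdescent
  rw [← neg_sub, inner_neg_right] at hconvex
  field_simp at hdescent ⊢
  nlinarith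

theorem agd_energy_step {L : ℝ} (hL : 0 < L) (hconv : ConvexOn ℝ univ f)
    (hgrad : ∀ θ, HasGradientAt f (f' θ) θ) (hlip : ∀ a b, ‖f' a - f' b‖ ≤ L * ‖a - b‖)
    {τ : ℝ} (hτ : 1 ≤ τ) {a b y z : E} (hy : y = a - (1 / L) • f' a) :
    2 / L * τ ^ 2 * (f y - f z) + ‖τ • y - (τ - 1) • b - z‖ ^ 2
      ≤ 2 / L * (τ ^ 2 - τ) * (f b - f z) + ‖τ • a - (τ - 1) • b - z‖ ^ 2 := by
  set g := f' a
  set w := τ • a - (τ - 1) • b - z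
  have hfrom_b := gradient_step_le hL hconv hgrad hlip a b
  have hfrom_z := gradient_step_le hL hconv hgrad hlip a z
  rw [← hy] at hfrom_b hfrom_z
  have hw_inner : ⟪g, w⟫_ℝ = (τ - 1) * ⟪g, a - b⟫_ℝ + ⟪g, a - z⟫_ℝ := by
    rw [← inner_smul_right, ← inner_add_right]
    congr 1
    module
  have hnorm : ‖τ • y - (τ - 1) • b - z‖ ^ 2
      = ‖w‖ ^ 2 - 2 * (τ / L) * ⟪g, w⟫_ℝ + (τ / L) ^ 2 * ‖g‖ ^ 2 := by
    have : τ • y - (τ - 1) • b - z = w - (τ / L) • g := by rw [hy]; module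
    rw [this, norm_sub_sq_real, inner_smul_right, norm_smul, mul_pow, real_inner_comm,
      Real.norm_eq_abs, sq_abs]
    ring
  rw [hnorm, hw_inner]
  linear_combination (2 * τ / L) * ((τ - 1) * hfrom_b + hfrom_z)

theorem agd_energy_le {L : ℝ} (hL : 0 < L) (hconv : ConvexOn ℝ univ f)
    (hgrad : ∀ θ, HasGradientAt f (f' θ) θ) (hlip : ∀ a b, ‖f' a - f' b‖ ≤ L * ‖a - b‖)
    (z : E) {x y : ℕ → E} {t : ℕ → ℝ} (ht0 : t 0 = 1)
    (hy : ∀ k, y (k + 1) = x k - (1 / L) • f' (x k))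
    (ht : ∀ k, t (k + 1) = nesterovNext (t k))
    (hx : ∀ k, x (k + 1) = y (k + 1) + ((t k - 1) / t (k + 1)) • (y (k + 1) - y k)) (k : ℕ) :
    2 / L * t k ^ 2 * (f (y (k + 1)) - f z) + ‖t k • y (k + 1) - (t k - 1) • y k - z‖ ^ 2
      ≤ ‖x 0 - z‖ ^ 2 := by
  induction k with
  | zero =>
    simpa [ht0] using agd_energy_step hL hconv hgrad hlip le_rfl (b := y 0) (z := z) (hy 0)
  | succ k ih =>
    have ht_one : 1 ≤ t (k + 1) := by
      have := add_two_div_two_le_of_nesterovNext ht0 ht (k + 1)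
      push_cast at this
      linarith [k.cast_nonneg (α := ℝ)]
    have hmomentum : t (k + 1) • x (k + 1) - (t (k + 1) - 1) • y (k + 1)
        = t k • y (k + 1) - (t k - 1) • y k := by
      rw [hx k, smul_add, smul_smul, mul_div_cancel₀ _ (by positivity)]
      module
    have hstep :=
      agd_energy_step hL hconv hgrad hlip ht_one (b := y (k + 1)) (z := z) (hy (k + 1))
    rw [hmomentum, ht k, nesterovNext_sq_sub_self, ← ht k] at hstep
    exact hstep.trans ih

end ConvexSmooth

theorem accelerated_gradient_descent_convergence_general
    (d : ℕ) (f : EuclideanSpace ℝ (Fin d) → ℝ)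
    (f' : EuclideanSpace ℝ (Fin d) → EuclideanSpace ℝ (Fin d))
    (L : ℝ) (hL : 0 < L)
    (hconv : ConvexOn ℝ Set.univ f)
    (hgrad : ∀ θ, HasGradientAt f (f' θ) θ)
    (hlip : ∀ a b : EuclideanSpace ℝ (Fin d), ‖f' a - f' b‖ ≤ L * ‖a - b‖)
    (xstar : EuclideanSpace ℝ (Fin d))
    (x y : ℕ → EuclideanSpace ℝ (Fin d)) (t : ℕ → ℝ)
    (ht0 : t 0 = 1)
    (hy : ∀ k : ℕ, y (k + 1) = x k - (1 / L) • f' (x k))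
    (ht : ∀ k : ℕ, t (k + 1) = (1 + Real.sqrt (1 + 4 * (t k) ^ 2)) / 2)
    (hx : ∀ k : ℕ, x (k + 1) = y (k + 1) + ((t k - 1) / t (k + 1)) • (y (k + 1) - y k)) :
    ∀ k : ℕ, 1 ≤ k →
      f (y k) - f xstar ≤ 2 * L * ‖x 0 - xstar‖ ^ 2 / ((k : ℝ) + 1) ^ 2 := by
  intro k hk
  obtain ⟨m, rfl⟩ := Nat.exists_eq_add_of_le' hk
  have henergy := agd_energy_le hL hconv hgrad hlip xstar ht0 hy ht hx m
  have ht_ge := add_two_div_two_le_of_nesterovNext ht0 ht m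
  have hnorm := sq_nonneg ‖t m • y (m + 1) - (t m - 1) • y m - xstar‖
  rcases le_or_gt (f (y (m + 1)) - f xstar) 0 with hgap | hgap
  · exact hgap.trans (by positivity)
  rw [le_div_iff₀ (by positivity)]
  calc (f (y (m + 1)) - f xstar) * ((m + 1 : ℕ) + 1 : ℝ) ^ 2
      ≤ (f (y (m + 1)) - f xstar) * (2 * t m) ^ 2 := by
        gcongr
        push_cast
        linarith
    _ = 2 * L * (2 / L * t m ^ 2 * (f (y (m + 1)) - f xstar)) := by field_simp
    _ ≤ 2 * L * ‖x 0 - xstar‖ ^ 2 := by gcongr; linarith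

/-- Accelerated gradient descent: if `f : ℝ^d → ℝ` is convex with `L`-Lipschitz
gradient and global minimizer `x*`, then Nesterov's iterates satisfy
`f(y_k) − f(x*) ≤ 2 L ‖x_0 − x*‖² / (k + 1)²` for all `k ≥ 1`. -/
theorem accelerated_gradient_descent_convergence
    (d : ℕ) (f : EuclideanSpace ℝ (Fin d) → ℝ)
    (f' : EuclideanSpace ℝ (Fin d) → EuclideanSpace ℝ (Fin d))
    (L : ℝ) (hL : 0 < L)
    (hconv : ConvexOn ℝ Set.univ f)
    (hgrad : ∀ θ, HasGradientAt f (f' θ) θ)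
    (hlip : ∀ a b : EuclideanSpace ℝ (Fin d), ‖f' a - f' b‖ ≤ L * ‖a - b‖)
    (xstar : EuclideanSpace ℝ (Fin d)) (hmin : ∀ z, f xstar ≤ f z)
    (x y : ℕ → EuclideanSpace ℝ (Fin d)) (t : ℕ → ℝ)
    (hinit : x 0 = y 0) (ht0 : t 0 = 1)
    (hy : ∀ k : ℕ, y (k + 1) = x k - (1 / L) • f' (x k))
    (ht : ∀ k : ℕ, t (k + 1) = (1 + Real.sqrt (1 + 4 * (t k) ^ 2)) / 2)
    (hx : ∀ k : ℕ, x (k + 1) = y (k + 1) + ((t k - 1) / t (k + 1)) • (y (k + 1) - y k)) :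
    ∀ k : ℕ, 1 ≤ k →
      f (y k) - f xstar ≤ 2 * L * ‖x 0 - xstar‖ ^ 2 / ((k : ℝ) + 1) ^ 2 :=
  accelerated_gradient_descent_convergence_general d f f' L hL hconv hgrad hlip xstar x y t ht0 hy
    ht hx
end

section
/- Let X be a real n × d matrix, let D_1, …, D_P be diagonal n × n matrices with diagonal entries in {0, 1}, and let v_1, …, v_P, w_1, …, w_P ∈ ℝ^d satisfy the cone constraints (2 D_i − I) X v_i ≥ 0 and (2 D_i − I) X w_i ≥ 0 componentwise for every i. Then there exist first-layer weight vectors Θ_1, …, Θ_{2P} ∈ ℝ^d and second-layer scalars θ_1, …, θ_{2P} ∈ ℝ such that Σ_{j=1}^{2P} max(X Θ_j, 0) · θ_j = Σ_{i=1}^P D_i X (v_i − w_i) (where max(·,0) is applied coordinatewise to the vector X Θ_j ∈ ℝ^n) and (1/2) Σ_{j=1}^{2P} (‖Θ_j‖² + θ_j²) = Σ_{i=1}^P (‖v_i‖ + ‖w_i‖). -/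
/-!
Each `v i` becomes the neuron `(‖v i‖^{-1/2} • v i, ‖v i‖^{1/2})` and each `w i` the neuron
`(‖w i‖^{-1/2} • w i, -‖w i‖^{1/2})`. Positive homogeneity of the ReLU shows that the first
neuron outputs `max (X v i) 0`, and the cone constraint on `v i` says exactly that this is
`D i X v i`; likewise for `w i`. The balanced scaling makes `‖Θ‖² + θ² = 2 ‖u‖` for each
neuron, which turns weight decay into the group-lasso penalty.
-/

open Finset

lemma max_eq_mul_of_mask {d a : ℝ} (hd : d = 0 ∨ d = 1) (ha : 0 ≤ (2 * d - 1) * a) :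
    max a 0 = d * a := by
  rcases hd with rfl | rfl
  · rw [max_eq_right (by linarith), zero_mul]
  · rw [max_eq_left (by linarith), one_mul]

section BalancedNeuron

variable {E : Type*} [NormedAddCommGroup E] [NormedSpace ℝ E]

noncomputable def balancedNeuron (u : E) : E × ℝ := ((√‖u‖)⁻¹ • u, √‖u‖)

lemma relu_balancedNeuron_mul (ℓ : E →ₗ[ℝ] ℝ) (u : E) :
    max (ℓ (balancedNeuron u).1) 0 * (balancedNeuron u).2 = max (ℓ u) 0 := by
  rcases eq_or_ne u 0 with rfl | hu
  · simp [balancedNeuron]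
  have hs : 0 < √‖u‖ := Real.sqrt_pos.mpr (norm_pos_iff.mpr hu)
  rw [balancedNeuron, map_smul, smul_eq_mul, max_mul_of_nonneg _ _ hs.le, zero_mul, mul_comm,
    mul_inv_cancel_left₀ hs.ne']

lemma norm_sq_add_sq_balancedNeuron (u : E) :
    ‖(balancedNeuron u).1‖ ^ 2 + (balancedNeuron u).2 ^ 2 = 2 * ‖u‖ := by
  rcases eq_or_ne u 0 with rfl | hu
  · simp [balancedNeuron]
  have hn : 0 < ‖u‖ := norm_pos_iff.mpr hu
  rw [balancedNeuron, norm_smul, norm_inv, Real.norm_of_nonneg (Real.sqrt_nonneg _), mul_pow,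
    inv_pow, Real.sq_sqrt hn.le]
  field_simp
  ring

end BalancedNeuron

/-- Constructive direction of the convex reformulation of two-layer ReLU networks:
feasible points `(v_i, w_i)` of the convex program give a two-layer ReLU network with
`2P` neurons having the same prediction vector, whose weight-decay regularizer equals
the group-lasso penalty. -/
theorem convex_feasible_point_realized_by_relu_network
    (n dd P : ℕ) (X : Matrix (Fin n) (Fin dd) ℝ)
    (D : Fin P → Fin n → ℝ) (hD : ∀ i r, D i r = 0 ∨ D i r = 1)
    (v w : Fin P → EuclideanSpace ℝ (Fin dd))
    (hv : ∀ i r, (2 * D i r - 1) * X.mulVec (v i) r ≥ 0)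
    (hw : ∀ i r, (2 * D i r - 1) * X.mulVec (w i) r ≥ 0) :
    ∃ (Θ : Fin (2 * P) → EuclideanSpace ℝ (Fin dd)) (θ : Fin (2 * P) → ℝ),
      (∀ r : Fin n,
        ∑ j, max (X.mulVec (Θ j) r) 0 * θ j
          = ∑ i, D i r * X.mulVec (v i - w i) r) ∧
      (1 / 2 : ℝ) * ∑ j, (‖Θ j‖ ^ 2 + (θ j) ^ 2)
        = ∑ i, (‖v i‖ + ‖w i‖) := by
  let e : Fin P ⊕ Fin P ≃ Fin (2 * P) := finSumFinEquiv.trans (finCongr (two_mul P).symm)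
  let N : Fin P ⊕ Fin P → EuclideanSpace ℝ (Fin dd) × ℝ := Sum.elim (fun i => balancedNeuron (v i))
    fun i => ((balancedNeuron (w i)).1, -(balancedNeuron (w i)).2)
  let row (r : Fin n) : EuclideanSpace ℝ (Fin dd) →ₗ[ℝ] ℝ :=
    LinearMap.proj r ∘ₗ X.mulVecLin ∘ₗ (WithLp.linearEquiv 2 ℝ (Fin dd → ℝ)).toLinearMap
  have hrelu (r : Fin n) (u : EuclideanSpace ℝ (Fin dd)) :
      max (X.mulVec (balancedNeuron u).1 r) 0 * (balancedNeuron u).2 = max (X.mulVec u r) 0 :=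
    relu_balancedNeuron_mul (row r) u
  refine ⟨fun j => (N (e.symm j)).1, fun j => (N (e.symm j)).2, fun r => ?_, ?_⟩
  · rw [← e.sum_comp]
    simp only [Equiv.symm_apply_apply, Fintype.sum_sum_type, N, Sum.elim_inl, Sum.elim_inr,
      mul_neg, hrelu]
    rw [sum_neg_distrib, ← sub_eq_add_neg, ← sum_sub_distrib]
    refine sum_congr rfl fun i _ => ?_
    rw [max_eq_mul_of_mask (hD i r) (hv i r), max_eq_mul_of_mask (hD i r) (hw i r),
      Matrix.mulVec_sub, Pi.sub_apply, mul_sub]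
  · rw [← e.sum_comp]
    simp only [Equiv.symm_apply_apply, Fintype.sum_sum_type, N, Sum.elim_inl, Sum.elim_inr,
      neg_sq, norm_sq_add_sq_balancedNeuron, ← sum_add_distrib, mul_sum]
    exact sum_congr rfl fun i _ => by ring
end
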